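/- arXiv:1805.07199 — 4 statements merged into one kernel-verified Lean document; each statement's English description precedes it below -/
import Mathlib

section
/- Fix a real κ > 1. For η > 0 put s(η) = ⌈√((κ−1)η/2)⌉ and define the effective ESGD convergence rate c(η) = ( T_{s(η)}(1 + η/s(η)²) )^{−2/s(η)}. Then lim_{η→∞} c(η) = (y − √(y²−1))², where y = 1 + 2/(κ−1). (Equivalently, the limit equals exp(−2·arcosh(1 + 2/(κ−1))).) -/
open Filter Topology Real Polynomial

/-!
For `x ≥ 1` one has `T_s(x) = cosh (s · arcosh x)`, and `log cosh w = |w| + O(1)`, so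
`T_s(x)^(-2/s) = exp (-2 arcosh x + O(1/s))`. Since `s(η) ~ √((κ-1)η/2)`, the argument
`1 + η/s(η)²` tends to `y = 1 + 2/(κ-1)`, and `exp (-2 arcosh y) = (y - √(y²-1))²`.
-/

lemma log_cosh_le_abs (x : ℝ) : log (cosh x) ≤ |x| := by
  have h : cosh x ≤ exp |x| := by
    rw [← cosh_abs, cosh_eq]
    linarith [exp_le_exp.2 (neg_le_self (abs_nonneg x))]
  simpa using log_le_log (cosh_pos x) h

lemma abs_sub_log_two_le_log_cosh (x : ℝ) : |x| - log 2 ≤ log (cosh x) := by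
  have h : exp |x| / 2 ≤ cosh x := by
    rw [← cosh_abs, cosh_eq]
    linarith [exp_pos (-|x|)]
  simpa [log_div (exp_ne_zero _)] using log_le_log (by positivity) h

lemma tendsto_log_cosh_mul_div {α : Type*} {l : Filter α} {s t : α → ℝ} {L : ℝ}
    (hs : Tendsto s l atTop) (ht : Tendsto t l (𝓝 L)) :
    Tendsto (fun a => log (cosh (s a * t a)) / s a) l (𝓝 |L|) := by
  have habs : Tendsto (fun a => |t a|) l (𝓝 |L|) := ht.abs
  have hlower : Tendsto (fun a => |t a| - log 2 / s a) l (𝓝 |L|) := by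
    simpa using habs.sub (tendsto_const_nhds.div_atTop hs)
  refine tendsto_of_tendsto_of_tendsto_of_le_of_le' hlower habs ?_ ?_ <;>
    filter_upwards [hs.eventually_gt_atTop 0] with a hsa
  · rw [le_div_iff₀ hsa]
    have := abs_sub_log_two_le_log_cosh (s a * t a)
    rw [abs_mul, abs_of_pos hsa] at this
    linarith [show (|t a| - log 2 / s a) * s a = s a * |t a| - log 2 by field_simp]
  · rw [div_le_iff₀ hsa]
    have := log_cosh_le_abs (s a * t a)
    rw [abs_mul, abs_of_pos hsa] at this
    linarith

lemma chebyshevT_eval_eq_cosh_mul_arcosh (n : ℤ) {x : ℝ} (hx : 1 ≤ x) :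
    (Chebyshev.T ℝ n).eval x = cosh (n * arcosh x) := by
  rw [← Chebyshev.T_real_cosh, cosh_arcosh hx]

theorem tendsto_chebyshevT_eval_rpow_div {α : Type*} {l : Filter α} [l.NeBot]
    {s : α → ℕ} {x : α → ℝ} {y : ℝ} (hs : Tendsto s l atTop) (hx : Tendsto x l (𝓝 y))
    (hx1 : ∀ᶠ a in l, 1 ≤ x a) (r : ℝ) :
    Tendsto (fun a => (Chebyshev.T ℝ (s a : ℤ)).eval (x a) ^ (r / (s a : ℝ))) l
      (𝓝 (exp (r * arcosh y))) := by
  have hy : 1 ≤ y := ge_of_tendsto hx hx1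
  have hsR : Tendsto (fun a => (s a : ℝ)) l atTop := tendsto_natCast_atTop_atTop.comp hs
  have harcosh : Tendsto (fun a => arcosh (x a)) l (𝓝 (arcosh y)) :=
    (continuousOn_arcosh y hy).tendsto.comp (tendsto_nhdsWithin_iff.2 ⟨hx, hx1⟩)
  have hlog := tendsto_log_cosh_mul_div hsR harcosh
  rw [abs_of_nonneg (arcosh_nonneg hy)] at hlog
  refine (hlog.const_mul r).rexp.congr' ?_
  filter_upwards [hx1] with a hxa
  rw [chebyshevT_eval_eq_cosh_mul_arcosh _ hxa, rpow_def_of_pos (cosh_pos _)]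
  push_cast
  ring_nf

lemma exp_neg_two_mul_arcosh {y : ℝ} (hy : 1 ≤ y) :
    exp (-2 * arcosh y) = (y - √(y ^ 2 - 1)) ^ 2 := by
  rw [show -2 * arcosh y = -arcosh y + -arcosh y by ring, exp_add, exp_neg, exp_arcosh hy,
    add_sqrt_self_sq_sub_one_inv hy, ← sq]

lemma tendsto_div_sq_nat_ceil_sqrt_mul {c : ℝ} (hc : 0 < c) :
    Tendsto (fun η : ℝ => η / (⌈√(c * η)⌉₊ : ℝ) ^ 2) atTop (𝓝 c⁻¹) := by
  have hu : Tendsto (fun η : ℝ => √(c * η)) atTop atTop :=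
    tendsto_sqrt_atTop.comp (tendsto_id.const_mul_atTop hc)
  have hratio := ((tendsto_nat_ceil_div_atTop.comp hu).inv₀ one_ne_zero).pow 2 |>.mul_const c⁻¹
  rw [inv_one, one_pow, one_mul] at hratio
  refine hratio.congr' ?_
  filter_upwards [eventually_gt_atTop 0] with η hη
  have hsq : √(c * η) ^ 2 = c * η := sq_sqrt (by positivity)
  simp only [Function.comp_apply]
  field_simp
  rw [hsq]

/-- Fix `κ > 1`. With `s(η) = ⌈√((κ−1)η/2)⌉` and effective ESGD rate
`c(η) = (T_{s(η)}(1 + η/s(η)²))^{−2/s(η)}`, we have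
`lim_{η→∞} c(η) = (y − √(y²−1))²` where `y = 1 + 2/(κ−1)`. -/
theorem esgd_effective_rate_limit (κ : ℝ) (hκ : 1 < κ) :
    Filter.Tendsto
      (fun η : ℝ =>
        ((Polynomial.Chebyshev.T ℝ ((⌈Real.sqrt ((κ - 1) * η / 2)⌉₊ : ℕ) : ℤ)).eval
            (1 + η / ((⌈Real.sqrt ((κ - 1) * η / 2)⌉₊ : ℕ) : ℝ) ^ 2)) ^
          (-2 / ((⌈Real.sqrt ((κ - 1) * η / 2)⌉₊ : ℕ) : ℝ)))
      Filter.atTop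
      (nhds ((1 + 2 / (κ - 1) - Real.sqrt ((1 + 2 / (κ - 1)) ^ 2 - 1)) ^ 2)) := by
  have hc : 0 < (κ - 1) / 2 := by linarith
  have hceil : Tendsto (fun η : ℝ => ⌈√((κ - 1) * η / 2)⌉₊) atTop atTop :=
    tendsto_nat_ceil_atTop.comp <| tendsto_sqrt_atTop.comp <|
      (tendsto_id.const_mul_atTop (sub_pos.2 hκ)).atTop_div_const two_pos
  have hx : Tendsto (fun η : ℝ => 1 + η / (⌈√((κ - 1) * η / 2)⌉₊ : ℝ) ^ 2) atTop
      (𝓝 (1 + 2 / (κ - 1))) := by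
    simpa only [mul_div_right_comm (κ - 1), inv_div] using
      (tendsto_div_sq_nat_ceil_sqrt_mul hc).const_add 1
  have hx1 : ∀ᶠ η : ℝ in atTop, 1 ≤ 1 + η / (⌈√((κ - 1) * η / 2)⌉₊ : ℝ) ^ 2 := by
    filter_upwards [eventually_ge_atTop 0] with η hη
    have : 0 ≤ η / (⌈√((κ - 1) * η / 2)⌉₊ : ℝ) ^ 2 := by positivity
    linarith
  have hlim := tendsto_chebyshevT_eval_rpow_div hceil hx hx1 (-2)
  rwa [exp_neg_two_mul_arcosh (ge_of_tendsto hx hx1)] at hlim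
end

section
/- Let A ∈ ℝ^{d×d} be symmetric positive definite with smallest eigenvalue ℓ > 0 and largest eigenvalue L, and condition number κ = L/ℓ > 1. Let g : ℝ^d → ℝ be convex and differentiable with β-Lipschitz gradient, let f(x) = ½xᵀAx + g(x), and let x* be the unique minimizer of f (so Ax* + ∇g(x*) = 0). Fix η > 0, let s and h be the ESGD parameters, set C(η) = ω₁·α_s(η)/(ω₀−1), and let γ > 0 satisfy 0 < β < γ·ℓ·C(η). Then the PESGD iterates, given by x_{n+1} = R_s(−hA)x_n − h·B_s(−hA)·∇g(x_n), satisfy ‖x_{n+1} − x*‖ ≤ (1+γ)·α_s(η)·‖x_n − x*‖ for every n. -/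
/-!
The error `eₙ = xₙ - x*` obeys `eₙ₊₁ = R_s(-hA) eₙ - h B_s(-hA) (∇g(xₙ) - ∇g(x*))`, because `x*` is
a fixed point of the iteration: `R_s(ζ) = 1 + ζ B_s(ζ)` and `-hA x* = h ∇g(x*)`.
The choice of `s` and `h` sends every eigenvalue of `-hA` to a point `z < 0` with
`ω₀ + ω₁ z ∈ [-1, 1]`. There `|R_s(z)| ≤ α_s` because `|T_s| ≤ 1`, and `1 + z ≤ R_s(z) ≤ 1`, so
`0 ≤ B_s(z) ≤ 1`. The lower bound is the tangent-line inequality for `T_s` at `ω₀ ≥ 1`: on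
`[1, ∞)` it holds because `T_s(1 + u)` has nonnegative coefficients (every derivative of `T_s` at
`1` is nonnegative), and on `[-1, 1]` it follows from Markov's bound `|T_s'| ≤ s²`.
Hence `‖eₙ₊₁‖ ≤ (α_s + hβ) ‖eₙ‖`, and `hβ < γ ℓ C(η) h = γ α_s`.
-/

open Polynomial Matrix

noncomputable section

/-- The degree-`n` Chebyshev polynomial of the first kind over `ℝ`,
characterized by `T_n (cos θ) = cos (n θ)`. -/
def chebT (n : ℕ) : Polynomial ℝ := Polynomial.Chebyshev.T ℝ (n : ℤ)

/-- `ω₀ = 1 + η / s²`. -/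
def omega0 (s : ℕ) (η : ℝ) : ℝ := 1 + η / (s : ℝ) ^ 2

/-- `ω₁ = T_s(ω₀) / T_s'(ω₀)`. -/
def omega1 (s : ℕ) (η : ℝ) : ℝ :=
  (chebT s).eval (omega0 s η) / (Polynomial.derivative (chebT s)).eval (omega0 s η)

/-- `α_s(η) = 1 / T_s(ω₀)`. -/
def alphaS (s : ℕ) (η : ℝ) : ℝ := ((chebT s).eval (omega0 s η))⁻¹

/-- The stability polynomial `R_s(z) = T_s(ω₀ + ω₁ z) / T_s(ω₀)`. -/
def RsPoly (s : ℕ) (η : ℝ) : Polynomial ℝ :=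
  Polynomial.C (alphaS s η) *
    (chebT s).comp (Polynomial.C (omega0 s η) + Polynomial.C (omega1 s η) * Polynomial.X)

/-- The polynomial `B_s` with `ζ · B_s(ζ) = R_s(ζ) − 1`. -/
def BsPoly (s : ℕ) (η : ℝ) : Polynomial ℝ := (RsPoly s η - 1) /ₘ Polynomial.X

/-- The ESGD stage number `s = ⌈√((κ−1)η/2)⌉`. -/
def stages (κ η : ℝ) : ℕ := ⌈Real.sqrt ((κ - 1) * η / 2)⌉₊

/-- The ESGD step size `h = (ω₀ − 1)/(ω₁ ℓ)`. -/
def stepSize (κ η ℓ : ℝ) : ℝ :=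
  (omega0 (stages κ η) η - 1) / (omega1 (stages κ η) η * ℓ)

/-- The constant `C(η) = ω₁ α_s(η) / (ω₀ − 1)`. -/
def Ceta (s : ℕ) (η : ℝ) : ℝ := omega1 s η * alphaS s η / (omega0 s η - 1)

end

namespace Polynomial

lemma eval_nonneg_of_coeff_nonneg {p : ℝ[X]} (hp : ∀ k, 0 ≤ p.coeff k) {u : ℝ} (hu : 0 ≤ u) :
    0 ≤ p.eval u := by
  rw [eval_eq_sum_range]
  exact Finset.sum_nonneg fun k _ => mul_nonneg (hp k) (pow_nonneg hu k)

lemma eval_le_eval_of_coeff_le {p q : ℝ[X]} (h : ∀ k, p.coeff k ≤ q.coeff k) {u : ℝ}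
    (hu : 0 ≤ u) : p.eval u ≤ q.eval u := by
  simpa using eval_nonneg_of_coeff_nonneg (p := q - p) (fun k => by simpa using h k) hu

lemma coeff_zero_le_eval_of_coeff_nonneg {p : ℝ[X]} (hp : ∀ k, 0 ≤ p.coeff k) {u : ℝ}
    (hu : 0 ≤ u) : p.coeff 0 ≤ p.eval u := by
  simpa using eval_le_eval_of_coeff_le (p := C (p.coeff 0))
    (fun k => by rcases k with _ | k <;> simp [coeff_C, hp]) hu

lemma coeff_one_le_eval_derivative_of_coeff_nonneg {p : ℝ[X]} (hp : ∀ k, 0 ≤ p.coeff k) {u : ℝ}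
    (hu : 0 ≤ u) : p.coeff 1 ≤ (derivative p).eval u := by
  have h := coeff_zero_le_eval_of_coeff_nonneg
    (fun k => by rw [coeff_derivative]; exact mul_nonneg (hp _) (by positivity)) hu
  simpa [coeff_derivative] using h

lemma eval_sub_coeff_zero_le_of_coeff_nonneg {p : ℝ[X]} (hp : ∀ k, 0 ≤ p.coeff k) {u : ℝ}
    (hu : 0 ≤ u) : p.eval u - p.coeff 0 ≤ u * (derivative p).eval u := by
  have hcoeff : ∀ k, (p - C (p.coeff 0)).coeff k ≤ (X * derivative p).coeff k := by
    rintro (_ | k)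
    · simp
    · simp only [coeff_sub, coeff_C, coeff_X_mul, coeff_derivative]
      push_cast
      nlinarith [hp (k + 1)]
  simpa using eval_le_eval_of_coeff_le hcoeff hu

lemma derivative_taylor (r : ℝ) (p : ℝ[X]) :
    derivative (taylor r p) = taylor r (derivative p) := by
  simp [taylor_apply, derivative_comp]

end Polynomial

namespace Polynomial.Chebyshev

lemma iterate_derivative_T_real_eval_one_nonneg (n k : ℕ) :
    0 ≤ (derivative^[k] (T ℝ n)).eval 1 := by
  rw [iterate_derivative_T_eval_one_eq_div]
  refine div_nonneg (Int.cast_nonneg ?_) (by positivity)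
  rcases lt_or_ge n k with hnk | hkn
  · exact (Finset.prod_eq_zero (Finset.mem_range.2 hnk) (by simp)).ge
  · refine Finset.prod_nonneg fun l hl => ?_
    have hln : l ≤ n := (Finset.mem_range.1 hl).le.trans hkn
    have : (l : ℤ) ^ 2 ≤ (n : ℤ) ^ 2 := by gcongr
    linarith

lemma coeff_taylor_one_T_real_nonneg (n k : ℕ) : 0 ≤ (taylor 1 (T ℝ n)).coeff k := by
  have hhasse : (derivative^[k] (T ℝ n)).eval 1 = k.factorial * (hasseDeriv k (T ℝ n)).eval 1 := by
    rw [← factorial_smul_hasseDeriv]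
    simp
  rw [taylor_coeff]
  have := iterate_derivative_T_real_eval_one_nonneg n k
  rw [hhasse] at this
  exact (mul_nonneg_iff_of_pos_left (by positivity)).1 this

lemma T_real_eval_sub_one_le (n : ℕ) {x : ℝ} (hx : 1 ≤ x) :
    (T ℝ n).eval x - 1 ≤ (x - 1) * (derivative (T ℝ n)).eval x := by
  simpa [taylor_eval, derivative_taylor] using
    eval_sub_coeff_zero_le_of_coeff_nonneg (coeff_taylor_one_T_real_nonneg n) (sub_nonneg.2 hx)

lemma sq_le_derivative_T_real_eval (n : ℕ) {x : ℝ} (hx : 1 ≤ x) :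
    (n : ℝ) ^ 2 ≤ (derivative (T ℝ n)).eval x := by
  simpa [taylor_eval, derivative_taylor, derivative_T_eval_one] using
    coeff_one_le_eval_derivative_of_coeff_nonneg (coeff_taylor_one_T_real_nonneg n)
      (sub_nonneg.2 hx)

lemma one_sub_sq_mul_le_T_real_eval (n : ℕ) {y : ℝ} (hy : |y| ≤ 1) :
    1 - (n : ℝ) ^ 2 * (1 - y) ≤ (T ℝ n).eval y := by
  have hderiv : ∀ x ∈ interior (Set.Icc (-1 : ℝ) 1), deriv (T ℝ n).eval x ≤ n ^ 2 := by
    intro x hx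
    rw [interior_Icc] at hx
    have hmarkov := abs_iterate_derivative_T_real_le n 1 (abs_le.2 ⟨hx.1.le, hx.2.le⟩)
    rw [Function.iterate_one, derivative_T_eval_one] at hmarkov
    rw [Polynomial.deriv]
    exact_mod_cast (le_abs_self _).trans hmarkov
  have hmvt := (convex_Icc (-1 : ℝ) 1).image_sub_le_mul_sub_of_deriv_le (T ℝ n).continuousOn
    (T ℝ n).differentiableOn hderiv y (abs_le.1 hy) 1 (by norm_num) (abs_le.1 hy).2
  rw [T_eval_one] at hmvt
  linarith

lemma T_real_eval_add_derivative_mul_le (n : ℕ) {w y : ℝ} (hw : 1 ≤ w) (hy : |y| ≤ 1) :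
    (T ℝ n).eval w + (derivative (T ℝ n)).eval w * (y - w) ≤ (T ℝ n).eval y := by
  have h₁ := T_real_eval_sub_one_le n hw
  have h₂ := sq_le_derivative_T_real_eval n hw
  have h₃ := one_sub_sq_mul_le_T_real_eval n hy
  nlinarith [mul_nonneg (sub_nonneg.2 h₂) (sub_nonneg.2 (abs_le.1 hy).2)]

end Polynomial.Chebyshev

section StabilityPolynomial

open Chebyshev

variable {s : ℕ} {η : ℝ}

lemma ne_zero_of_one_lt_omega0 (hω : 1 < omega0 s η) : s ≠ 0 := by
  rintro rfl
  simp [omega0] at hω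

lemma one_le_chebT_eval_omega0 (hω : 1 < omega0 s η) : 1 ≤ (chebT s).eval (omega0 s η) :=
  one_le_eval_T_real _ hω.le

lemma chebT_eval_omega0_pos (hω : 1 < omega0 s η) : 0 < (chebT s).eval (omega0 s η) :=
  one_pos.trans_le (one_le_chebT_eval_omega0 hω)

lemma derivative_chebT_eval_omega0_pos (hω : 1 < omega0 s η) :
    0 < (derivative (chebT s)).eval (omega0 s η) := by
  have := ne_zero_of_one_lt_omega0 hω
  exact (by positivity : (0 : ℝ) < (s : ℝ) ^ 2).trans_le (sq_le_derivative_T_real_eval s hω.le)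

lemma alphaS_pos (hω : 1 < omega0 s η) : 0 < alphaS s η :=
  inv_pos.2 (chebT_eval_omega0_pos hω)

lemma alphaS_le_one (hω : 1 < omega0 s η) : alphaS s η ≤ 1 :=
  inv_le_one_of_one_le₀ (one_le_chebT_eval_omega0 hω)

lemma omega1_pos (hω : 1 < omega0 s η) : 0 < omega1 s η :=
  div_pos (chebT_eval_omega0_pos hω) (derivative_chebT_eval_omega0_pos hω)

lemma RsPoly_eval (z : ℝ) :
    (RsPoly s η).eval z = alphaS s η * (chebT s).eval (omega0 s η + omega1 s η * z) := by
  simp [RsPoly, eval_comp]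

lemma RsPoly_sub_one (hω : 1 < omega0 s η) : RsPoly s η - 1 = X * BsPoly s η := by
  have hroot : (RsPoly s η - 1).eval 0 = 0 := by
    rw [eval_sub, RsPoly_eval, mul_zero, add_zero, alphaS,
      inv_mul_cancel₀ (chebT_eval_omega0_pos hω).ne', eval_one, sub_self]
  have := modByMonic_add_div (RsPoly s η - 1) X
  rw [modByMonic_X, hroot, map_zero, zero_add] at this
  exact this.symm

lemma abs_RsPoly_eval_le (hω : 1 < omega0 s η) {z : ℝ}
    (hz : |omega0 s η + omega1 s η * z| ≤ 1) : |(RsPoly s η).eval z| ≤ alphaS s η := by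
  rw [RsPoly_eval, abs_mul, abs_of_pos (alphaS_pos hω)]
  exact mul_le_of_le_one_right (alphaS_pos hω).le (abs_eval_T_real_le_one _ hz)

-- `ω₁ T_s'(ω₀) = T_s(ω₀)` makes `1 + z` the tangent line of `R_s` at `0`.
lemma one_add_le_RsPoly_eval (hω : 1 < omega0 s η) {z : ℝ}
    (hz : |omega0 s η + omega1 s η * z| ≤ 1) : 1 + z ≤ (RsPoly s η).eval z := by
  have hT := chebT_eval_omega0_pos hω
  have hT' := (derivative_chebT_eval_omega0_pos hω).ne'
  rw [RsPoly_eval, alphaS, ← div_eq_inv_mul, le_div_iff₀ hT]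
  calc (1 + z) * (chebT s).eval (omega0 s η)
      = (chebT s).eval (omega0 s η) + (derivative (chebT s)).eval (omega0 s η) *
          (omega0 s η + omega1 s η * z - omega0 s η) := by
        rw [omega1]
        field_simp
        ring
    _ ≤ _ := T_real_eval_add_derivative_mul_le s hω.le hz

lemma abs_BsPoly_eval_le_one (hω : 1 < omega0 s η) {z : ℝ} (hz₀ : z < 0)
    (hz : |omega0 s η + omega1 s η * z| ≤ 1) : |(BsPoly s η).eval z| ≤ 1 := by
  have hfac : (RsPoly s η).eval z - 1 = z * (BsPoly s η).eval z := by
    simpa using congrArg (eval z) (RsPoly_sub_one hω)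
  have hupper : (RsPoly s η).eval z ≤ 1 :=
    (le_abs_self _).trans ((abs_RsPoly_eval_le hω hz).trans (alphaS_le_one hω))
  have hlower := one_add_le_RsPoly_eval hω hz
  rw [abs_le]
  constructor <;> nlinarith

end StabilityPolynomial

section Parameters

variable {κ η ℓ : ℝ}

lemma stages_pos (hκ : 1 < κ) (hη : 0 < η) : 0 < stages κ η :=
  Nat.ceil_pos.2 (Real.sqrt_pos.2 (by nlinarith))

lemma one_lt_omega0_stages (hκ : 1 < κ) (hη : 0 < η) : 1 < omega0 (stages κ η) η := by
  have := stages_pos hκ hη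
  rw [omega0, lt_add_iff_pos_right]
  positivity

-- `s ≥ √((κ - 1) η / 2)` is exactly what keeps the spectrum of `-hA` inside the stability region.
lemma sub_one_mul_omega0_stages_sub_one_le_two (hκ : 1 < κ) (hη : 0 < η) :
    (κ - 1) * (omega0 (stages κ η) η - 1) ≤ 2 := by
  have hs : (0 : ℝ) < (stages κ η : ℝ) ^ 2 := by
    have := stages_pos hκ hη
    positivity
  have hsqrt : √((κ - 1) * η / 2) ≤ stages κ η := Nat.le_ceil _
  have hsq := Real.sq_sqrt (show 0 ≤ (κ - 1) * η / 2 by nlinarith)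
  rw [omega0, add_sub_cancel_left, ← mul_div_assoc, div_le_iff₀ hs]
  nlinarith [Real.sqrt_nonneg ((κ - 1) * η / 2)]

lemma stepSize_pos (hκ : 1 < κ) (hη : 0 < η) (hℓ : 0 < ℓ) : 0 < stepSize κ η ℓ :=
  div_pos (sub_pos.2 (one_lt_omega0_stages hκ hη))
    (mul_pos (omega1_pos (one_lt_omega0_stages hκ hη)) hℓ)

lemma omega1_mul_stepSize (hκ : 1 < κ) (hη : 0 < η) (hℓ : 0 < ℓ) :
    omega1 (stages κ η) η * stepSize κ η ℓ = (omega0 (stages κ η) η - 1) / ℓ := by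
  have := (omega1_pos (one_lt_omega0_stages hκ hη)).ne'
  rw [stepSize]
  field_simp

lemma stepSize_mul_Ceta (hκ : 1 < κ) (hη : 0 < η) (hℓ : 0 < ℓ) :
    stepSize κ η ℓ * (ℓ * Ceta (stages κ η) η) = alphaS (stages κ η) η := by
  have := (omega1_pos (one_lt_omega0_stages hκ hη)).ne'
  have := (sub_pos.2 (one_lt_omega0_stages hκ hη)).ne'
  rw [stepSize, Ceta]
  field_simp

lemma abs_omega0_add_omega1_mul_stepSize_le_one {L μ : ℝ} (hℓ : 0 < ℓ) (hκ : 1 < L / ℓ)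
    (hη : 0 < η) (hμ : μ ∈ Set.Icc ℓ L) :
    |omega0 (stages (L / ℓ) η) η + omega1 (stages (L / ℓ) η) η * (-stepSize (L / ℓ) η ℓ * μ)|
      ≤ 1 := by
  have hω := sub_pos.2 (one_lt_omega0_stages hκ hη)
  have hwidth := sub_one_mul_omega0_stages_sub_one_le_two hκ hη
  have hμℓ : 1 ≤ μ / ℓ := (one_le_div hℓ).2 hμ.1
  have hμL : μ / ℓ ≤ L / ℓ := div_le_div_of_nonneg_right hμ.2 hℓ.le
  have hy : omega0 (stages (L / ℓ) η) η + omega1 (stages (L / ℓ) η) η * (-stepSize (L / ℓ) η ℓ * μ)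
      = 1 - (omega0 (stages (L / ℓ) η) η - 1) * (μ / ℓ - 1) := by
    rw [neg_mul, mul_neg, ← mul_assoc, omega1_mul_stepSize hκ hη hℓ]
    ring
  rw [hy, abs_le]
  constructor <;> nlinarith

end Parameters

section Iteration

open scoped Matrix.Norms.L2Operator in
lemma Matrix.norm_toEuclideanCLM_aeval_smul_le {n : Type*} [Fintype n] [DecidableEq n]
    {A : Matrix n n ℝ} (hA : A.IsHermitian) (P : ℝ[X]) (c : ℝ) {M : ℝ} (hM : 0 ≤ M)
    (hP : ∀ μ ∈ spectrum ℝ A, |P.eval (c * μ)| ≤ M) :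
    ‖toEuclideanCLM (n := n) (𝕜 := ℝ) (aeval (c • A) P)‖ ≤ M := by
  have hcomp : aeval (c • A) P = aeval A (P.comp (Polynomial.C c * X)) := by
    rw [aeval_comp]
    simp [Algebra.smul_def]
  rw [l2_opNorm_toEuclideanCLM, hcomp, ← cfc_polynomial _ A hA.isSelfAdjoint]
  exact norm_cfc_le hM fun μ hμ => by simpa using hP μ hμ

lemma Matrix.toEuclideanCLM_aeval_apply_of_sub_one_eq_X_mul {n : Type*} [Fintype n]
    [DecidableEq n] (M : Matrix n n ℝ) {P Q : ℝ[X]} (hPQ : P - 1 = X * Q)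
    (v : EuclideanSpace ℝ n) :
    toEuclideanCLM (𝕜 := ℝ) (aeval M P) v
      = v + toEuclideanCLM (𝕜 := ℝ) (aeval M Q) (toEuclideanCLM (𝕜 := ℝ) M v) := by
  rw [sub_eq_iff_eq_add, mul_comm] at hPQ
  rw [hPQ, map_add, map_one, map_mul, aeval_X, map_add, map_one, map_mul]
  exact add_comm _ _

lemma norm_sub_le_of_lipschitz_step {E : Type*} [SeminormedAddCommGroup E] [NormedSpace ℝ E]
    (R B : E →L[ℝ] E) {G : E → E} {h β : ℝ} (hh : 0 ≤ h)
    (hG : ∀ u v, ‖G u - G v‖ ≤ β * ‖u - v‖) (u v : E) :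
    ‖(R u - h • B (G u)) - (R v - h • B (G v))‖ ≤ (‖R‖ + h * ‖B‖ * β) * ‖u - v‖ := by
  have hsplit : (R u - h • B (G u)) - (R v - h • B (G v)) = R (u - v) - h • B (G u - G v) := by
    simp only [map_sub, smul_sub]
    abel
  rw [hsplit]
  calc ‖R (u - v) - h • B (G u - G v)‖
      ≤ ‖R (u - v)‖ + h * ‖B (G u - G v)‖ :=
        (norm_sub_le _ _).trans_eq (by rw [norm_smul, Real.norm_of_nonneg hh])
    _ ≤ ‖R‖ * ‖u - v‖ + h * (‖B‖ * (β * ‖u - v‖)) := by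
        gcongr
        · exact R.le_opNorm _
        · exact (B.le_opNorm _).trans (by gcongr; exact hG u v)
    _ = (‖R‖ + h * ‖B‖ * β) * ‖u - v‖ := by ring

end Iteration

theorem pesgd_convergence_general {d : ℕ}
    (A : Matrix (Fin d) (Fin d) ℝ) (hA : A.PosDef)
    (ℓ L : ℝ) (hℓ : 0 < ℓ)
    (hspec : spectrum ℝ A ⊆ Set.Icc ℓ L)
    (hκ : 1 < L / ℓ)
    (g : EuclideanSpace ℝ (Fin d) → ℝ)
    (β : ℝ) (hβ : 0 < β)
    (hLip : ∀ x y, ‖gradient g x - gradient g y‖ ≤ β * ‖x - y‖)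
    (η : ℝ) (hη : 0 < η) (γ : ℝ)
    (hβbound : β < γ * ℓ * Ceta (stages (L / ℓ) η) η)
    (xstar : EuclideanSpace ℝ (Fin d))
    (hstat : Matrix.toEuclideanCLM (𝕜 := ℝ) A xstar + gradient g xstar = 0)
    (x : ℕ → EuclideanSpace ℝ (Fin d))
    (hiter : ∀ n, x (n + 1) =
      Matrix.toEuclideanCLM (𝕜 := ℝ)
          (Polynomial.aeval ((-(stepSize (L / ℓ) η ℓ)) • A) (RsPoly (stages (L / ℓ) η) η)) (x n)
        - stepSize (L / ℓ) η ℓ •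
          Matrix.toEuclideanCLM (𝕜 := ℝ)
            (Polynomial.aeval ((-(stepSize (L / ℓ) η ℓ)) • A) (BsPoly (stages (L / ℓ) η) η))
            (gradient g (x n))) :
    ∀ n, ‖x (n + 1) - xstar‖ ≤
      (1 + γ) * alphaS (stages (L / ℓ) η) η * ‖x n - xstar‖ := by
  set s := stages (L / ℓ) η
  set h := stepSize (L / ℓ) η ℓ
  set R := toEuclideanCLM (𝕜 := ℝ) (aeval (-h • A) (RsPoly s η))
  set B := toEuclideanCLM (𝕜 := ℝ) (aeval (-h • A) (BsPoly s η))
  have hω : 1 < omega0 s η := one_lt_omega0_stages hκ hη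
  have hh : 0 < h := stepSize_pos hκ hη hℓ
  have hstable : ∀ μ ∈ spectrum ℝ A, |omega0 s η + omega1 s η * (-h * μ)| ≤ 1 :=
    fun μ hμ => abs_omega0_add_omega1_mul_stepSize_le_one hℓ hκ hη (hspec hμ)
  have hR : ‖R‖ ≤ alphaS s η :=
    norm_toEuclideanCLM_aeval_smul_le hA.isHermitian _ _ (alphaS_pos hω).le
      fun μ hμ => abs_RsPoly_eval_le hω (hstable μ hμ)
  have hB : ‖B‖ ≤ 1 :=
    norm_toEuclideanCLM_aeval_smul_le hA.isHermitian _ _ zero_le_one fun μ hμ =>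
      abs_BsPoly_eval_le_one hω (by nlinarith [(hspec hμ).1]) (hstable μ hμ)
  have hfix : R xstar - h • B (gradient g xstar) = xstar := by
    have hAx : toEuclideanCLM (𝕜 := ℝ) (-h • A) xstar = h • gradient g xstar := by
      rw [map_smul, _root_.smul_apply, eq_neg_of_add_eq_zero_left hstat, smul_neg, neg_smul,
        neg_neg]
    rw [toEuclideanCLM_aeval_apply_of_sub_one_eq_X_mul _ (RsPoly_sub_one hω), hAx, map_smul,
      add_sub_cancel_right]
  have hstep : h * β ≤ γ * alphaS s η := by
    rw [← stepSize_mul_Ceta hκ hη hℓ]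
    nlinarith
  intro n
  calc ‖x (n + 1) - xstar‖
      = ‖(R (x n) - h • B (gradient g (x n))) - (R xstar - h • B (gradient g xstar))‖ := by
        rw [hiter n, hfix]
    _ ≤ (‖R‖ + h * ‖B‖ * β) * ‖x n - xstar‖ := norm_sub_le_of_lipschitz_step R B hh.le hLip _ _
    _ ≤ (1 + γ) * alphaS s η * ‖x n - xstar‖ := by
        gcongr
        nlinarith [mul_le_mul_of_nonneg_left hB (mul_pos hh hβ).le]

/-- **Theorem (PESGD convergence).** Let `A` be symmetric positive definite with smallest
eigenvalue `ℓ > 0`, largest eigenvalue `L`, condition number `κ = L/ℓ > 1`; let `g` be convex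
differentiable with `β`-Lipschitz gradient, `f(x) = ½xᵀAx + g(x)` with unique minimizer `x*`
(so `Ax* + ∇g(x*) = 0`). Fix `η > 0`, choose the ESGD parameters `s`, `h`, set
`C(η) = ω₁ α_s(η)/(ω₀ − 1)`, and let `γ > 0` satisfy `0 < β < γ ℓ C(η)`. Then the PESGD
iterates `x_{n+1} = R_s(−hA) xₙ − h B_s(−hA) ∇g(xₙ)` satisfy
`‖x_{n+1} − x*‖ ≤ (1+γ) α_s(η) ‖xₙ − x*‖`. -/
theorem pesgd_convergence {d : ℕ}
    (A : Matrix (Fin d) (Fin d) ℝ) (hA : A.PosDef)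
    (ℓ L : ℝ) (hℓ : 0 < ℓ) (hℓL : ℓ ≤ L)
    (hℓspec : ℓ ∈ spectrum ℝ A) (hLspec : L ∈ spectrum ℝ A)
    (hspec : spectrum ℝ A ⊆ Set.Icc ℓ L)
    (hκ : 1 < L / ℓ)
    (g : EuclideanSpace ℝ (Fin d) → ℝ) (hg : Differentiable ℝ g)
    (hgconv : ConvexOn ℝ Set.univ g)
    (β : ℝ) (hβ : 0 < β)
    (hLip : ∀ x y, ‖gradient g x - gradient g y‖ ≤ β * ‖x - y‖)
    (η : ℝ) (hη : 0 < η) (γ : ℝ) (hγ : 0 < γ)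
    (hβbound : β < γ * ℓ * Ceta (stages (L / ℓ) η) η)
    (f : EuclideanSpace ℝ (Fin d) → ℝ)
    (hf : ∀ x, f x = (1 / 2) * (inner ℝ x (Matrix.toEuclideanCLM (𝕜 := ℝ) A x) : ℝ) + g x)
    (xstar : EuclideanSpace ℝ (Fin d))
    (hmin : ∀ z, f xstar ≤ f z)
    (hstat : Matrix.toEuclideanCLM (𝕜 := ℝ) A xstar + gradient g xstar = 0)
    (x : ℕ → EuclideanSpace ℝ (Fin d))
    (hiter : ∀ n, x (n + 1) =
      Matrix.toEuclideanCLM (𝕜 := ℝ)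
          (Polynomial.aeval ((-(stepSize (L / ℓ) η ℓ)) • A) (RsPoly (stages (L / ℓ) η) η)) (x n)
        - stepSize (L / ℓ) η ℓ •
          Matrix.toEuclideanCLM (𝕜 := ℝ)
            (Polynomial.aeval ((-(stepSize (L / ℓ) η ℓ)) • A) (BsPoly (stages (L / ℓ) η) η))
            (gradient g (x n))) :
    ∀ n, ‖x (n + 1) - xstar‖ ≤
      (1 + γ) * alphaS (stages (L / ℓ) η) η * ‖x n - xstar‖ :=
  pesgd_convergence_general A hA ℓ L hℓ hspec hκ g β hβ hLip η hη γ hβbound xstar hstat x hiter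
end

section
/- Let 0 < ℓ ≤ L with κ = L/ℓ > 1, let η > 0, and let s = ⌈√((κ−1)η/2)⌉, ω₀ = 1 + η/s², ω₁ = T_s(ω₀)/T_s′(ω₀), h = (ω₀−1)/(ω₁ℓ). Then ω₁ > 0, h > 0, ω₀ − ω₁ℓh = 1, and ω₀ − ω₁Lh ≥ −1; consequently, for every λ ∈ [ℓ, L] one has −1 ≤ ω₀ − ω₁λh ≤ 1. -/
open Polynomial Matrix

lemma chebT_succ_two (n : ℕ) : chebT (n+2) = 2 * Polynomial.X * chebT (n+1) - chebT n := by
  simp only [chebT]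
  push_cast
  exact Polynomial.Chebyshev.T_add_two ℝ n

lemma cheb_chain (x : ℝ) (hx : 1 ≤ x) (n : ℕ) :
    1 ≤ (chebT n).eval x ∧ (chebT n).eval x ≤ (chebT (n+1)).eval x ∧
    0 ≤ (Polynomial.derivative (chebT n)).eval x ∧
    (Polynomial.derivative (chebT n)).eval x ≤ (Polynomial.derivative (chebT (n+1))).eval x := by
  induction n with
  | zero =>
    simp [chebT, Polynomial.Chebyshev.T_zero, Polynomial.Chebyshev.T_one, hx]
  | succ n ih =>
    obtain ⟨h1, h2, h3, h4⟩ := ih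
    have e2 := chebT_succ_two n
    have ed : Polynomial.derivative (chebT (n+2)) =
        2 * chebT (n+1) + 2 * Polynomial.X * Polynomial.derivative (chebT (n+1))
          - Polynomial.derivative (chebT n) := by
      rw [e2]; simp [Polynomial.derivative_mul]; try ring
    refine ⟨by linarith, ?_, by linarith, ?_⟩
    · rw [e2]
      simp only [Polynomial.eval_sub, Polynomial.eval_mul, Polynomial.eval_ofNat,
        Polynomial.eval_X]
      nlinarith
    · rw [ed]
      simp only [Polynomial.eval_sub, Polynomial.eval_add, Polynomial.eval_mul,
        Polynomial.eval_ofNat, Polynomial.eval_X]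
      nlinarith

lemma chebT_deriv_ge_one (x : ℝ) (hx : 1 ≤ x) (n : ℕ) :
    1 ≤ (Polynomial.derivative (chebT (n+1))).eval x := by
  induction n with
  | zero => simp [chebT, Polynomial.Chebyshev.T_one]
  | succ n ih => exact ih.trans (cheb_chain x hx (n+1)).2.2.2

/-- With the ESGD parameters `s = ⌈√((κ−1)η/2)⌉`, `ω₀ = 1 + η/s²`, `ω₁ = T_s(ω₀)/T_s'(ω₀)`,
`h = (ω₀−1)/(ω₁ℓ)` for `0 < ℓ ≤ L`, `κ = L/ℓ > 1`, `η > 0`: `ω₁ > 0`, `h > 0`,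
`ω₀ − ω₁ℓh = 1`, `ω₀ − ω₁Lh ≥ −1`, and `−1 ≤ ω₀ − ω₁λh ≤ 1` for every `λ ∈ [ℓ, L]`. -/
theorem esgd_parameter_bounds (ℓ L η : ℝ) (hℓ : 0 < ℓ) (hℓL : ℓ ≤ L)
    (hκ : 1 < L / ℓ) (hη : 0 < η) :
    0 < omega1 (stages (L / ℓ) η) η ∧
    0 < stepSize (L / ℓ) η ℓ ∧
    omega0 (stages (L / ℓ) η) η -
      omega1 (stages (L / ℓ) η) η * ℓ * stepSize (L / ℓ) η ℓ = 1 ∧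
    -1 ≤ omega0 (stages (L / ℓ) η) η -
      omega1 (stages (L / ℓ) η) η * L * stepSize (L / ℓ) η ℓ ∧
    ∀ lam ∈ Set.Icc ℓ L,
      -1 ≤ omega0 (stages (L / ℓ) η) η -
          omega1 (stages (L / ℓ) η) η * lam * stepSize (L / ℓ) η ℓ ∧
        omega0 (stages (L / ℓ) η) η -
          omega1 (stages (L / ℓ) η) η * lam * stepSize (L / ℓ) η ℓ ≤ 1 := by
  set s := stages (L / ℓ) η with hs_def
  have hκ1 : 0 < L / ℓ - 1 := by linarith
  have harg : 0 < (L / ℓ - 1) * η / 2 := by positivity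
  have hs0 : 0 < s := by
    rw [hs_def, stages, Nat.lt_ceil]
    exact_mod_cast Real.sqrt_pos.mpr harg
  have hsc : (L / ℓ - 1) * η / 2 ≤ (s : ℝ) ^ 2 := by
    have h1 : Real.sqrt ((L / ℓ - 1) * η / 2) ≤ (s : ℝ) := Nat.le_ceil _
    have h2 := Real.sq_sqrt harg.le
    nlinarith [Real.sqrt_nonneg ((L / ℓ - 1) * η / 2)]
  have hspos : (0:ℝ) < (s : ℝ) ^ 2 := by positivity
  have hω0 : omega0 s η = 1 + η / (s:ℝ)^2 := rfl
  have hA : 0 < η / (s:ℝ)^2 := by positivity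
  have hω0gt : 1 ≤ omega0 s η := by rw [hω0]; linarith
  have hκA : (L / ℓ - 1) * (omega0 s η - 1) ≤ 2 := by
    have hωm1 : omega0 s η - 1 = η / (s:ℝ)^2 := by rw [hω0]; ring
    rw [hωm1, ← mul_div_assoc, div_le_iff₀ hspos]
    nlinarith
  obtain ⟨m, hm⟩ : ∃ m, s = m + 1 := ⟨s - 1, (Nat.succ_pred_eq_of_pos hs0).symm⟩
  have hT : 1 ≤ (chebT s).eval (omega0 s η) := by rw [hm]; exact (cheb_chain _ (hm ▸ hω0gt) (m+1)).1
  have hT' : 1 ≤ (Polynomial.derivative (chebT s)).eval (omega0 s η) := by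
    rw [hm]; exact chebT_deriv_ge_one _ (hm ▸ hω0gt) m
  have hω1 : 0 < omega1 s η := div_pos (by linarith) (by linarith)
  have hne : omega1 s η * ℓ ≠ 0 := by positivity
  have hh : stepSize (L / ℓ) η ℓ = (omega0 s η - 1) / (omega1 s η * ℓ) := by
    rw [stepSize, ← hs_def]
  have hhpos : 0 < stepSize (L / ℓ) η ℓ := by
    rw [hh]; exact div_pos (by linarith) (by positivity)
  have key : omega1 s η * ℓ * stepSize (L / ℓ) η ℓ = omega0 s η - 1 := by
    rw [hh, mul_div_cancel₀ _ hne]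
  have keyL : omega1 s η * L * stepSize (L / ℓ) η ℓ = (L / ℓ) * (omega0 s η - 1) := by
    rw [hh]; field_simp
  have hL : -1 ≤ omega0 s η - omega1 s η * L * stepSize (L / ℓ) η ℓ := by
    rw [keyL]; nlinarith
  refine ⟨hω1, hhpos, by rw [key]; ring, hL, ?_⟩
  intro lam hlam
  obtain ⟨hl1, hl2⟩ := hlam
  have hprod : 0 < omega1 s η * stepSize (L / ℓ) η ℓ := mul_pos hω1 hhpos
  constructor
  · nlinarith
  · nlinarith
end

section
/- Let s ≥ 1 be an integer and η > 0, and let L_{s,η} = (1+ω₀)/ω₁. Then for every z ∈ [−L_{s,η}, 0], the derivative of the stability function satisfies |R_s′(z)| ≤ 1. -/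
open Polynomial Matrix

open Polynomial.Chebyshev in
private lemma U_eval_add_two' (x : ℝ) (n : ℤ) :
    (U ℝ (n+2)).eval x = 2*x*(U ℝ (n+1)).eval x - (U ℝ n).eval x := by
  rw [U_add_two]; simp [mul_assoc]

open Polynomial.Chebyshev in
private lemma T_eval_add_two' (x : ℝ) (n : ℤ) :
    (T ℝ (n+2)).eval x = 2*x*(T ℝ (n+1)).eval x - (T ℝ n).eval x := by
  rw [T_add_two]; simp [mul_assoc]

private lemma abs_sin_nat_mul_le' (θ : ℝ) : ∀ n : ℕ, |Real.sin (n*θ)| ≤ n * |Real.sin θ| := by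
  intro n
  induction n with
  | zero => simp
  | succ n ih =>
    have heq : ((n:ℝ)+1)*θ = n*θ + θ := by ring
    have hc1 : |Real.cos θ| ≤ 1 := Real.abs_cos_le_one θ
    have hc2 : |Real.cos (n*θ)| ≤ 1 := Real.abs_cos_le_one _
    have hs1 : (0:ℝ) ≤ |Real.sin (n*θ)| := abs_nonneg _
    have hs2 : (0:ℝ) ≤ |Real.sin θ| := abs_nonneg _
    push_cast
    rw [heq, Real.sin_add]
    calc |Real.sin (n*θ) * Real.cos θ + Real.cos (n*θ) * Real.sin θ|
        ≤ |Real.sin (n*θ) * Real.cos θ| + |Real.cos (n*θ) * Real.sin θ| := abs_add_le _ _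
      _ = |Real.sin (n*θ)| * |Real.cos θ| + |Real.cos (n*θ)| * |Real.sin θ| := by
          rw [abs_mul, abs_mul]
      _ ≤ ((n:ℝ)+1) * |Real.sin θ| := by nlinarith

open Polynomial.Chebyshev in
private lemma U_abs_le' (n : ℕ) {t : ℝ} (ht : t ∈ Set.Icc (-1:ℝ) 1) :
    |(U ℝ (n:ℤ)).eval t| ≤ (n:ℝ)+1 := by
  have hsub : Set.Icc (-1:ℝ) 1 ⊆ {t : ℝ | |(U ℝ (n:ℤ)).eval t| ≤ (n:ℝ)+1} := by
    rw [← closure_Ioo (by norm_num : (-1:ℝ) ≠ 1)]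
    apply closure_minimal
    · intro t ht
      obtain ⟨ht1, ht2⟩ := ht
      set θ := Real.arccos t with hθ
      have hct : Real.cos θ = t := Real.cos_arccos ht1.le ht2.le
      have hθ0 : 0 < θ := Real.arccos_pos.2 ht2
      have hθπ : θ < Real.pi := by
        refine lt_of_le_of_ne (Real.arccos_le_pi t) fun h => ?_
        have := Real.arccos_eq_pi.1 h
        linarith
      have hsθ : 0 < Real.sin θ := Real.sin_pos_of_pos_of_lt_pi hθ0 hθπ
      have key : (U ℝ (n:ℤ)).eval t * Real.sin θ = Real.sin (((n:ℝ)+1) * θ) := by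
        rw [← hct]
        have h2 := Polynomial.Chebyshev.U_real_cos θ (n:ℤ)
        rw [h2]; push_cast; ring_nf
      have hb : |Real.sin (((n:ℝ)+1) * θ)| ≤ ((n:ℝ)+1) * |Real.sin θ| := by
        have h3 := abs_sin_nat_mul_le' θ (n+1)
        push_cast at h3; exact h3
      have hmul : |(U ℝ (n:ℤ)).eval t| * |Real.sin θ| ≤ ((n:ℝ)+1) * |Real.sin θ| := by
        rw [← abs_mul, key]; exact hb
      exact le_of_mul_le_mul_right hmul (abs_pos.2 hsθ.ne')
    · exact isClosed_le ((Polynomial.continuous (U ℝ (n:ℤ))).abs) continuous_const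
  exact hsub ht

open Polynomial.Chebyshev in
private lemma U_mono_aux' {x y : ℝ} (hx : 1 ≤ x) (hxy : x ≤ y) : ∀ n : ℕ,
    ((n:ℝ)+1 ≤ (U ℝ (n:ℤ)).eval x) ∧
    ((U ℝ (n:ℤ)).eval x + 1 ≤ (U ℝ ((n:ℤ)+1)).eval x) ∧
    ((U ℝ (n:ℤ)).eval x ≤ (U ℝ (n:ℤ)).eval y) ∧
    ((U ℝ (n:ℤ)).eval y - (U ℝ (n:ℤ)).eval x
      ≤ (U ℝ ((n:ℤ)+1)).eval y - (U ℝ ((n:ℤ)+1)).eval x) := by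
  intro n
  induction n with
  | zero =>
    simp only [Nat.cast_zero, Int.cast_zero]
    norm_num [U_zero, U_one]
    constructor <;> nlinarith
  | succ n ih =>
    obtain ⟨h1, h2, h3, h4⟩ := ih
    have hy : (1:ℝ) ≤ y := le_trans hx hxy
    have e2x' : (U ℝ ((n:ℤ)+1+1)).eval x
        = 2*x*(U ℝ ((n:ℤ)+1)).eval x - (U ℝ (n:ℤ)).eval x := by
      rw [show (n:ℤ)+1+1 = (n:ℤ)+2 by ring]; exact U_eval_add_two' x n
    have e2y' : (U ℝ ((n:ℤ)+1+1)).eval y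
        = 2*y*(U ℝ ((n:ℤ)+1)).eval y - (U ℝ (n:ℤ)).eval y := by
      rw [show (n:ℤ)+1+1 = (n:ℤ)+2 by ring]; exact U_eval_add_two' y n
    have h1' : ((n:ℝ)+1)+1 ≤ (U ℝ ((n:ℤ)+1)).eval x := by linarith
    refine ⟨by push_cast; linarith, ?_, ?_, ?_⟩
    · push_cast; rw [e2x']; nlinarith
    · push_cast; nlinarith
    · push_cast; rw [e2x', e2y']; nlinarith

open Polynomial.Chebyshev in
private lemma T_ge_one' {x : ℝ} (hx : 1 ≤ x) : ∀ n : ℕ,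
    1 ≤ (T ℝ (n:ℤ)).eval x ∧ (T ℝ (n:ℤ)).eval x ≤ (T ℝ ((n:ℤ)+1)).eval x := by
  intro n
  induction n with
  | zero => simpa [T_zero, T_one] using hx
  | succ n ih =>
    obtain ⟨h1, h2⟩ := ih
    have e2x' : (T ℝ ((n:ℤ)+1+1)).eval x
        = 2*x*(T ℝ ((n:ℤ)+1)).eval x - (T ℝ (n:ℤ)).eval x := by
      rw [show (n:ℤ)+1+1 = (n:ℤ)+2 by ring]; exact T_eval_add_two' x n
    refine ⟨by push_cast; linarith, ?_⟩
    push_cast; rw [e2x']; nlinarith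

/-- For integer `s ≥ 1`, `η > 0`, and `L_{s,η} = (1+ω₀)/ω₁`, the derivative of the stability
function satisfies `|R_s′(z)| ≤ 1` for all `z ∈ [−L_{s,η}, 0]`. -/
theorem rs_deriv_bound (s : ℕ) (hs : 1 ≤ s) (η : ℝ) (hη : 0 < η) :
    ∀ z ∈ Set.Icc (-((1 + omega0 s η) / omega1 s η)) (0 : ℝ),
      |(Polynomial.derivative (RsPoly s η)).eval z| ≤ 1 := by
  intro z hz
  set w0 := omega0 s η with hw0def
  have hs0 : (0:ℝ) < (s:ℝ) := by exact_mod_cast hs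
  have hw0 : 1 < w0 := by
    rw [hw0def, omega0]
    have : 0 < η / (s:ℝ)^2 := div_pos hη (by positivity)
    linarith
  set m : ℕ := s - 1 with hm
  have hms : (m:ℤ) = (s:ℤ) - 1 := by
    rw [hm]; push_cast [Nat.cast_sub hs]; ring
  have hmr : (m:ℝ) + 1 = s := by
    rw [hm]; push_cast [Nat.cast_sub hs]; ring
  -- derivative of chebT
  have hderiv : ∀ t : ℝ, (Polynomial.derivative (chebT s)).eval t
      = (s:ℝ) * (Polynomial.Chebyshev.U ℝ (m:ℤ)).eval t := by
    intro t
    rw [chebT, Polynomial.Chebyshev.T_derivative_eq_U, hms]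
    push_cast
    simp
  have hUm := U_mono_aux' hw0.le (le_refl w0) m
  have hUw0 : (s:ℝ) ≤ (Polynomial.Chebyshev.U ℝ (m:ℤ)).eval w0 := by
    rw [← hmr]; exact hUm.1
  have hUw0pos : 0 < (Polynomial.Chebyshev.U ℝ (m:ℤ)).eval w0 := lt_of_lt_of_le hs0 hUw0
  set D := (Polynomial.derivative (chebT s)).eval w0 with hD
  have hDval : D = (s:ℝ) * (Polynomial.Chebyshev.U ℝ (m:ℤ)).eval w0 := hderiv w0
  have hDpos : 0 < D := by rw [hDval]; positivity
  have hTw0 : 1 ≤ (chebT s).eval w0 := (T_ge_one' hw0.le s).1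
  have hTpos : 0 < (chebT s).eval w0 := lt_of_lt_of_le one_pos hTw0
  have hw1 : omega1 s η = (chebT s).eval w0 / D := rfl
  have hw1pos : 0 < omega1 s η := by rw [hw1]; positivity
  have halpha : alphaS s η = ((chebT s).eval w0)⁻¹ := rfl
  have haw : alphaS s η * omega1 s η = D⁻¹ := by
    rw [halpha, hw1]
    field_simp
  -- compute the derivative evaluation
  have hREval : (Polynomial.derivative (RsPoly s η)).eval z
      = alphaS s η * (omega1 s η *
        (Polynomial.derivative (chebT s)).eval (w0 + omega1 s η * z)) := by
    rw [RsPoly, Polynomial.derivative_C_mul, Polynomial.derivative_comp]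
    simp [hw0def]
  set x := w0 + omega1 s η * z with hx
  have hxmem : -1 ≤ x ∧ x ≤ w0 := by
    obtain ⟨hz1, hz2⟩ := hz
    constructor
    · have : -(1 + w0) ≤ omega1 s η * z := by
        have h := mul_le_mul_of_nonneg_left hz1 hw1pos.le
        rw [mul_neg, mul_div_cancel₀ _ hw1pos.ne'] at h
        linarith [h]
      rw [hx]; linarith
    · have : omega1 s η * z ≤ 0 := mul_nonpos_of_nonneg_of_nonpos hw1pos.le hz2
      rw [hx]; linarith
  -- bound |U_m(x)| ≤ U_m(w0)
  have hUbound : |(Polynomial.Chebyshev.U ℝ (m:ℤ)).eval x|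
      ≤ (Polynomial.Chebyshev.U ℝ (m:ℤ)).eval w0 := by
    rcases le_or_gt x 1 with hx1 | hx1
    · have := U_abs_le' m ⟨hxmem.1, hx1⟩
      rw [hmr] at this
      linarith
    · have h := U_mono_aux' hx1.le hxmem.2 m
      have hxn : 0 ≤ (Polynomial.Chebyshev.U ℝ (m:ℤ)).eval x := by
        have hmn : (0:ℝ) ≤ (m:ℝ) := Nat.cast_nonneg m
        linarith [h.1]
      rw [abs_of_nonneg hxn]
      exact h.2.2.1
  rw [hREval, hderiv x, ← mul_assoc, haw]
  rw [abs_mul, abs_mul]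
  have hDi : |D⁻¹| = D⁻¹ := abs_of_nonneg (inv_nonneg.2 hDpos.le)
  have hsabs : |(s:ℝ)| = (s:ℝ) := abs_of_nonneg hs0.le
  rw [hDi, hsabs]
  rw [hDval]
  rw [inv_eq_one_div, div_mul_eq_mul_div, div_le_one (by positivity)]
  rw [one_mul]
  have := mul_le_mul_of_nonneg_left hUbound hs0.le
  linarith
end
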